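/- arXiv:1702.07867 — 7 statements merged into one kernel-verified Lean document; each statement's English description precedes it below -/
import Mathlib

section
/- A Tychonoff space that is a k-space is an Ascoli space; that is, if X is a Tychonoff k-space, then every compact subset of C(X) with the compact-open topology is equicontinuous. -/
/-!
Evaluating a family `H ⊆ C(X, ℝ)` at points gives a map `X → C(H, ℝ)`. On every compact
`K ⊆ X` it is continuous, since evaluation `C(K, ℝ) × K → ℝ` is jointly continuous, so in a
k-space it is continuous. When `H` is compact, `C(H, ℝ)` carries the topology of uniform
convergence, and continuity into it is exactly equicontinuity of `H`.
-/

/-- A Tychonoff space `X` is Ascoli if every compact subset of `C_k(X)`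
(the space of continuous real-valued functions with the compact-open topology)
is equicontinuous. -/
def IsAscoli (X : Type*) [TopologicalSpace X] : Prop :=
  ∀ K : Set C(X, ℝ), IsCompact K → Equicontinuous fun f : K => (f : X → ℝ)

open ContinuousMap

section

variable {X Y α : Type*} [TopologicalSpace X] [TopologicalSpace Y] [UniformSpace α]

theorem continuous_of_continuous_domRestrict_isCompact
    (hk : ∀ A : Set X, (∀ K : Set X, IsCompact K → IsClosed ((↑) ⁻¹' A : Set K)) →
      IsClosed A)
    {f : X → Y} (hf : ∀ K : Set X, IsCompact K → Continuous (K.domRestrict f)) :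
    Continuous f :=
  continuous_iff_isClosed.mpr fun _ hS ↦ hk _ fun K hK ↦ hS.preimage (hf K hK)

theorem equicontinuous_of_continuous_of_compactSpace [CompactSpace Y] {φ : X → C(Y, α)}
    (hφ : Continuous φ) : Equicontinuous fun y x ↦ φ x y :=
  equicontinuous_iff_continuous.mpr <| (continuous_iff_continuous_uniformFun φ).mp hφ

def ContinuousMap.evalFamily (H : Set C(X, α)) (x : X) : C(H, α) :=
  ⟨fun f ↦ f.1 x, (continuous_eval_const x).comp continuous_subtype_val⟩

theorem ContinuousMap.continuous_domRestrict_evalFamily (H : Set C(X, α)) {K : Set X}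
    (hK : IsCompact K) : Continuous (K.domRestrict (evalFamily H)) := by
  have := isCompact_iff_compactSpace.mp hK
  refine continuous_of_continuous_uncurry _ ?_
  exact continuous_eval.comp <|
    ((continuous_restrict K).comp (continuous_subtype_val.comp continuous_snd)).prodMk
      continuous_fst

end

theorem isAscoli_of_kSpace_general {X : Type*} [TopologicalSpace X]
    (hk : ∀ A : Set X, (∀ K : Set X, IsCompact K → IsClosed ((↑) ⁻¹' A : Set K)) →
      IsClosed A) :
    IsAscoli X := by
  intro H hH
  have := isCompact_iff_compactSpace.mp hH
  exact equicontinuous_of_continuous_of_compactSpace <|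
    continuous_of_continuous_domRestrict_isCompact hk fun _ ↦ continuous_domRestrict_evalFamily H

/-- Every Tychonoff k-space is Ascoli. -/
theorem isAscoli_of_kSpace {X : Type*} [TopologicalSpace X] [T2Space X]
    [CompletelyRegularSpace X]
    (hk : ∀ A : Set X, (∀ K : Set X, IsCompact K → IsClosed ((↑) ⁻¹' A : Set K)) →
      IsClosed A) :
    IsAscoli X :=
  isAscoli_of_kSpace_general hk
end

section
/- Suppose a Tychonoff space X admits a family {Uᵢ : i ∈ I} of open subsets, a set of points {aᵢ : i ∈ I} with aᵢ ∈ Uᵢ for each i, and a point z ∈ X such that (a) every compact subset of X meets only finitely many Uᵢ, and (b) z is a cluster point of {aᵢ : i ∈ I}. Then X is not an Ascoli space. -/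
/-!
Bump functions `f i` with `f i (a i) = 1` and support in `U i` vanish on every compact set for
all but finitely many `i`, so they converge to `0` in `C_k(X)` along the cofinite filter and,
together with `0`, form a compact set. This set is not equicontinuous at `z`: by the cluster
hypothesis some `a i` is arbitrarily close to `z` with `f i z = 0`, while `f i (a i) = 1`.
-/

open Set Filter Topology Uniformity

theorem CompletelyRegularSpace.exists_continuousMap_eq_one_eqOn_compl {X : Type*}
    [TopologicalSpace X] [CompletelyRegularSpace X] {U : Set X} {x : X} (hU : IsOpen U)
    (hx : x ∈ U) : ∃ f : C(X, ℝ), f x = 1 ∧ EqOn f 0 Uᶜ := by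
  obtain ⟨g, hg, hgx, hgU⟩ := completely_regular_isOpen x U hU hx
  refine ⟨⟨fun y => 1 - (g y : ℝ), by fun_prop⟩, by simp [hgx], fun y hy => ?_⟩
  simp [hgU hy]

theorem ContinuousMap.tendsto_of_eventually_eqOn_isCompact {ι X Y : Type*} [TopologicalSpace X]
    [UniformSpace Y] {l : Filter ι} {F : ι → C(X, Y)} {f : C(X, Y)}
    (h : ∀ K, IsCompact K → ∀ᶠ i in l, EqOn (F i) f K) : Tendsto F l (𝓝 f) :=
  tendsto_iff_forall_isCompact_tendstoUniformlyOn.2 fun K hK V hV =>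
    (h K hK).mono fun _ hi _ hx => by simpa only [hi hx] using refl_mem_uniformity hV

theorem EquicontinuousAt.frequently_mem_of_mapClusterPt {ι X α : Type*} [TopologicalSpace X]
    [UniformSpace α] {F : ι → X → α} {z : X} (hF : EquicontinuousAt F z) {l : Filter ι}
    {a : ι → X} (ha : MapClusterPt z l a) {V : Set (α × α)} (hV : V ∈ 𝓤 α) :
    ∃ᶠ i in l, (F i z, F i (a i)) ∈ V :=
  (ha.frequently (hF V hV)).mono fun i hi => hi i

theorem not_isAscoli_of_family_general {X : Type*} [TopologicalSpace X]
    [CompletelyRegularSpace X] {I : Type*} (U : I → Set X) (a : I → X) (z : X)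
    (hopen : ∀ i, IsOpen (U i)) (hmem : ∀ i, a i ∈ U i)
    (hfin : ∀ C : Set X, IsCompact C → {i : I | (C ∩ U i).Nonempty}.Finite)
    (hcluster : ∀ V ∈ nhds z, {i : I | a i ∈ V}.Infinite) :
    ¬ IsAscoli X := by
  intro hX
  choose f hf_one hf_zero using fun i =>
    CompletelyRegularSpace.exists_continuousMap_eq_one_eqOn_compl (hopen i) (hmem i)
  have hf_eventually : ∀ C, IsCompact C → ∀ᶠ i in cofinite, EqOn (f i) 0 C := fun C hC =>
    (hfin C hC).subset fun i hi =>
      not_disjoint_iff_nonempty_inter.1 fun hdisj => hi ((hf_zero i).mono hdisj.subset_compl_right)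
  have htend : Tendsto f cofinite (𝓝 0) :=
    ContinuousMap.tendsto_of_eventually_eqOn_isCompact hf_eventually
  have hequi : EquicontinuousAt (fun i => ⇑(f i)) z :=
    (hX _ htend.isCompact_insert_range_of_cofinite z).comp
      fun i => ⟨f i, mem_insert_of_mem _ (mem_range_self i)⟩
  have hclu : MapClusterPt z cofinite a :=
    mapClusterPt_iff_frequently.2 fun V hV => frequently_cofinite_iff_infinite.2 (hcluster V hV)
  obtain ⟨i, hclose, hzero⟩ :=
    ((hequi.frequently_mem_of_mapClusterPt hclu (Metric.dist_mem_uniformity one_pos))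
      |>.and_eventually (hf_eventually {z} isCompact_singleton)).exists
  have hdist : dist (f i z) (f i (a i)) < 1 := hclose
  simp [hzero rfl, hf_one] at hdist

/-- A sufficient condition for a Tychonoff space to fail the Ascoli property:
there are open sets `U i`, points `a i ∈ U i` and a point `z` such that every
compact set meets only finitely many `U i`, while every neighborhood of `z`
contains `a i` for infinitely many `i`. -/
theorem not_isAscoli_of_family {X : Type*} [TopologicalSpace X] [T2Space X]
    [CompletelyRegularSpace X] {I : Type*} (U : I → Set X) (a : I → X) (z : X)
    (hopen : ∀ i, IsOpen (U i)) (hmem : ∀ i, a i ∈ U i)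
    (hfin : ∀ C : Set X, IsCompact C → {i : I | (C ∩ U i).Nonempty}.Finite)
    (hcluster : ∀ V ∈ nhds z, {i : I | a i ∈ V}.Infinite) :
    ¬ IsAscoli X :=
  not_isAscoli_of_family_general U a z hopen hmem hfin hcluster
end

section
/- If a topological group G is an MK_ω-space and G is metrizable, then G is locally compact. -/
/-!
Suppose `C n` is a neighbourhood of `x` for no `n`. By first countability pick `f n → x` with
`f n ∉ C n`. Each `C m` contains only finitely many of the `f n`, so by the weak topology every
set of values of `f` is closed. Taking `x ∈ C m`, the set `f '' Ici m` misses `x` yet contains a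
tail of a sequence converging to `x`, a contradiction. So `X` is weakly locally compact, and
metrizability upgrades this to local compactness.
-/

open Filter Topology

section KOmega

variable {X : Type*} [TopologicalSpace X] [T1Space X] {C : ℕ → Set X}

theorem isClosed_of_subset_range_of_forall_notMem (hmono : Monotone C)
    (hweak : ∀ A : Set X, (∀ n, IsClosed ((↑) ⁻¹' A : Set (C n))) → IsClosed A)
    {f : ℕ → X} (hf : ∀ n, f n ∉ C n) {T : Set X} (hT : T ⊆ Set.range f) : IsClosed T := by
  refine hweak T fun m => ?_
  have hsub : ((↑) ⁻¹' T : Set (C m)) ⊆ (↑) ⁻¹' (f '' Set.Iio m) := by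
    rintro ⟨y, hyC⟩ hyT
    obtain ⟨k, rfl⟩ := hT hyT
    refine ⟨k, ?_, rfl⟩
    by_contra hk
    exact hf k (hmono (not_lt.mp hk) hyC)
  exact ((((Set.finite_Iio m).image f).preimage Subtype.val_injective.injOn).subset
    hsub).isClosed

theorem exists_mem_nhds_of_weakTopology [FirstCountableTopology X] (hmono : Monotone C)
    (hunion : ⋃ n, C n = Set.univ)
    (hweak : ∀ A : Set X, (∀ n, IsClosed ((↑) ⁻¹' A : Set (C n))) → IsClosed A) (x : X) :
    ∃ n, C n ∈ 𝓝 x := by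
  by_contra! hnot
  obtain ⟨U, hU⟩ := (𝓝 x).exists_antitone_basis
  have hescape : ∀ n, ∃ y ∈ U n, y ∉ C n := fun n => by
    by_contra! hsub
    exact hnot n (mem_of_superset (hU.mem n) hsub)
  choose f hfU hfC using hescape
  obtain ⟨m, hxm⟩ := Set.mem_iUnion.mp (hunion ▸ Set.mem_univ x)
  have hclosed : IsClosed (f '' Set.Ici m) :=
    isClosed_of_subset_range_of_forall_notMem hmono hweak hfC (Set.image_subset_range _ _)
  have hx : x ∈ f '' Set.Ici m :=
    hclosed.mem_of_tendsto (hU.tendsto hfU) <|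
      eventually_atTop.mpr ⟨m, fun n hn => Set.mem_image_of_mem f hn⟩
  obtain ⟨k, hk, hfk⟩ := hx
  exact hfC k (hfk ▸ hmono hk hxm)

end KOmega

theorem locallyCompact_of_metrizable_MKomega_group_general {G : Type*}
    [TopologicalSpace G] [TopologicalSpace.MetrizableSpace G]
    (C : ℕ → Set G) (hmono : Monotone C)
    (hcomp : ∀ n, IsCompact (C n))
    (hunion : ⋃ n, C n = Set.univ)
    (hfinal : ∀ A : Set G, IsClosed A ↔ ∀ n, IsClosed ((↑) ⁻¹' A : Set (C n))) :
    LocallyCompactSpace G := by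
  have : WeaklyLocallyCompactSpace G := ⟨fun x =>
    let ⟨n, hn⟩ := exists_mem_nhds_of_weakTopology hmono hunion (fun A => (hfinal A).2) x
    ⟨C n, hcomp n, hn⟩⟩
  infer_instance

/-- A metrizable topological group which is an `MK_ω`-space is locally compact. -/
theorem locallyCompact_of_metrizable_MKomega_group {G : Type*} [Group G]
    [TopologicalSpace G] [IsTopologicalGroup G] [TopologicalSpace.MetrizableSpace G]
    (C : ℕ → Set G) (hmono : Monotone C)
    (hcomp : ∀ n, IsCompact (C n)) (hmetr : ∀ n, TopologicalSpace.MetrizableSpace (C n))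
    (hunion : ⋃ n, C n = Set.univ)
    (hfinal : ∀ A : Set G, IsClosed A ↔ ∀ n, IsClosed ((↑) ⁻¹' A : Set (C n))) :
    LocallyCompactSpace G :=
  locallyCompact_of_metrizable_MKomega_group_general C hmono hcomp hunion hfinal
end

section
/- Let E be a separable metrizable infinite-dimensional locally convex space. Then the dual E' with the compact-open topology admits a weaker metrizable locally convex vector topology, and consequently every compact subset of (E', τ_k) is metrizable. -/
/-!
Choose a dense sequence `s` in `E`. Since functionals are continuous, `χ ↦ (χ (s n))ₙ` is an
injective linear map from `E'` to the metrizable locally convex space `ℝ^ℕ`, and it is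
`τ_k`-continuous because evaluation at a point is continuous for the compact-open topology. The
topology induced by this map is the required one. On a `τ_k`-compact set the same map is a
continuous injection into a Hausdorff space, hence an embedding, so the compact set is
metrizable.
-/

open Topology TopologicalSpace

variable {E : Type*} [AddCommGroup E] [Module ℝ E] [TopologicalSpace E]
  [IsTopologicalAddGroup E] [ContinuousSMul ℝ E]

/-- The compact-open topology on the dual of `E`, induced from `C(E, ℝ)`. -/
noncomputable def tauK (E : Type*) [AddCommGroup E] [Module ℝ E] [TopologicalSpace E] :
    TopologicalSpace (E →L[ℝ] ℝ) :=
  TopologicalSpace.induced (fun χ => (⟨χ, χ.continuous⟩ : C(E, ℝ))) inferInstance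

theorem Continuous.metrizableSpace_of_injective {X Y : Type*} [TopologicalSpace X]
    [CompactSpace X] [TopologicalSpace Y] [MetrizableSpace Y] {f : X → Y}
    (hf : Continuous f) (hf_inj : Function.Injective f) : MetrizableSpace X :=
  (hf.isClosedEmbedding hf_inj).isEmbedding.metrizableSpace

section EvalAt

variable {ι F : Type*} [AddCommGroup F] [Module ℝ F] [TopologicalSpace F]

def evalAt (s : ι → F) : (F →L[ℝ] ℝ) →ₗ[ℝ] (ι → ℝ) where
  toFun χ i := χ (s i)
  map_add' _ _ := rfl
  map_smul' _ _ := rfl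

theorem evalAt_injective {s : ι → F} (hs : DenseRange s) : Function.Injective (evalAt s) :=
  fun χ ψ h => DFunLike.coe_injective <|
    hs.equalizer χ.continuous ψ.continuous (funext fun i => congrFun h i)

theorem continuous_evalAt_tauK (s : ι → F) : Continuous[tauK F, _] (evalAt s) :=
  have : Continuous[tauK F, _] fun χ : F →L[ℝ] ℝ => (χ : C(F, ℝ)) := continuous_induced_dom
  let _ := tauK F
  continuous_pi fun i => (continuous_eval_const (s i)).comp this

theorem metrizableSpace_induced_evalAt [Countable ι] {s : ι → F} (hs : DenseRange s) :
    @MetrizableSpace _ ((inferInstance : TopologicalSpace (ι → ℝ)).induced (evalAt s)) :=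
  let _ : TopologicalSpace (F →L[ℝ] ℝ) := .induced (evalAt s) inferInstance
  IsEmbedding.metrizableSpace ⟨⟨rfl⟩, evalAt_injective hs⟩

end EvalAt

theorem dual_admits_weaker_metrizable_topology_general
    [SeparableSpace E] :
    (∃ t : TopologicalSpace (E →L[ℝ] ℝ), tauK E ≤ t ∧
      @MetrizableSpace _ t ∧ @IsTopologicalAddGroup _ t _ ∧ @ContinuousSMul ℝ _ _ _ t ∧
      @LocallyConvexSpace ℝ _ _ _ _ _ t) ∧
    ∀ K : Set (E →L[ℝ] ℝ), @IsCompact _ (tauK E) K →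
      @MetrizableSpace K ((tauK E).induced ((↑) : K → (E →L[ℝ] ℝ))) := by
  obtain ⟨s, hs⟩ := exists_dense_seq E
  refine ⟨⟨_, continuous_iff_le_induced.mp (continuous_evalAt_tauK s),
    metrizableSpace_induced_evalAt hs, topologicalAddGroup_induced (evalAt s),
    continuousSMul_induced (evalAt s), LocallyConvexSpace.induced (evalAt s)⟩, fun K hK => ?_⟩
  let _ := tauK E
  have : CompactSpace K := isCompact_iff_compactSpace.mp hK
  exact ((continuous_evalAt_tauK s).comp continuous_subtype_val).metrizableSpace_of_injective
    ((evalAt_injective hs).comp Subtype.val_injective)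

/-- For a separable metrizable infinite-dimensional locally convex space `E`,
the dual with the compact-open topology `τ_k` admits a weaker (coarser)
metrizable locally convex vector topology, and consequently every
`τ_k`-compact subset of the dual is metrizable. -/
theorem dual_admits_weaker_metrizable_topology
    [LocallyConvexSpace ℝ E] [MetrizableSpace E] [SeparableSpace E]
    (hinf : ¬ FiniteDimensional ℝ E) :
    (∃ t : TopologicalSpace (E →L[ℝ] ℝ), tauK E ≤ t ∧
      @MetrizableSpace _ t ∧ @IsTopologicalAddGroup _ t _ ∧ @ContinuousSMul ℝ _ _ _ t ∧
      @LocallyConvexSpace ℝ _ _ _ _ _ t) ∧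
    ∀ K : Set (E →L[ℝ] ℝ), @IsCompact _ (tauK E) K →
      @MetrizableSpace K ((tauK E).induced ((↑) : K → (E →L[ℝ] ℝ))) :=
  dual_admits_weaker_metrizable_topology_general
end

section
/- Let X = lim→ Xₙ be the inductive limit of a sequence of metrizable topological groups with Xₙ a closed subgroup of Xₙ₊₁ for every n. If there exists m such that Xₙ is open in Xₙ₊₁ for all n ≥ m, then X is metrizable. -/
/-!
An open subgroup of a topological group is also closed, so the group is T₁ as soon as the
subgroup is, and it carries the neighbourhood filter of `1`; a T₀ group whose identity has a
countable neighbourhood basis is metrizable. It thus suffices that `Xₘ` be open in `X`, and by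
the final topology this means `Xₘ` is open in every `Xₙ`: trivially for `n ≤ m`, and for
`n > m` because openness of relative subspaces composes along `Xₘ ⊆ ⋯ ⊆ Xₙ`.
-/

open Topology TopologicalSpace

theorem IsOpen.preimage_val_trans {α : Type*} [TopologicalSpace α] {s t u : Set α} (hst : s ⊆ t)
    (hs : IsOpen (Subtype.val ⁻¹' s : Set t)) (ht : IsOpen (Subtype.val ⁻¹' t : Set u)) :
    IsOpen (Subtype.val ⁻¹' s : Set u) := by
  obtain ⟨V, hV, hVs⟩ := isOpen_induced_iff.1 hs
  have hs_eq : s = t ∩ V := by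
    rw [← Set.inter_eq_right.2 hst]
    exact (Subtype.preimage_coe_eq_preimage_coe_iff.1 hVs).symm
  rw [hs_eq, Set.preimage_inter]
  exact ht.inter (hV.preimage continuous_subtype_val)

theorem Monotone.isOpen_preimage_val_of_eventually_isOpen {α : Type*} [TopologicalSpace α]
    {S : ℕ → Set α} (hS : Monotone S) {m : ℕ}
    (hopen : ∀ n ≥ m, IsOpen (Subtype.val ⁻¹' S n : Set (S (n + 1)))) (n : ℕ) :
    IsOpen (Subtype.val ⁻¹' S m : Set (S n)) := by
  rcases le_total n m with hnm | hmn
  · rw [Set.preimage_val_eq_univ_of_subset (hS hnm)]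
    exact isOpen_univ
  induction n, hmn using Nat.le_induction with
  | base => simp
  | succ n hmn ih => exact ih.preimage_val_trans (hS hmn) (hopen n hmn)

theorem IsTopologicalGroup.metrizableSpace {G : Type*} [Group G] [TopologicalSpace G]
    [IsTopologicalGroup G] [T0Space G] [(𝓝 (1 : G)).IsCountablyGenerated] :
    MetrizableSpace G :=
  letI := IsTopologicalGroup.rightUniformSpace G
  haveI : (uniformity G).IsCountablyGenerated := by
    rw [uniformity_eq_comap_nhds_one' G]
    infer_instance
  UniformSpace.metrizableSpace

theorem Subgroup.metrizableSpace_of_isOpen {G : Type*} [Group G] [TopologicalSpace G]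
    [IsTopologicalGroup G] (K : Subgroup G) [MetrizableSpace K] (hK : IsOpen (K : Set G)) :
    MetrizableSpace G := by
  have hclosed_one : IsClosed ({1} : Set G) := by
    rw [← K.coe_one, ← Set.image_singleton]
    exact (K.isClosed_of_isOpen hK).isClosedEmbedding_subtypeVal.isClosedMap _ isClosed_singleton
  have := IsTopologicalGroup.t1Space G hclosed_one
  have : (𝓝 (1 : G)).IsCountablyGenerated := by
    rw [← K.coe_one, ← hK.isOpenEmbedding_subtypeVal.map_nhds_eq]
    infer_instance
  exact IsTopologicalGroup.metrizableSpace

theorem metrizable_of_eventually_open_inductive_limit_general {X : Type*} [Group X]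
    [TopologicalSpace X] [IsTopologicalGroup X] (H : ℕ → Subgroup X)
    (hmono : Monotone H)
    (hmetr : ∀ n, TopologicalSpace.MetrizableSpace (H n))
    (hfinal : ∀ U : Set X, IsOpen U ↔ ∀ n, IsOpen ((↑) ⁻¹' U : Set (H n)))
    (m : ℕ) (hopen : ∀ n ≥ m, IsOpen {x : H (n + 1) | (x : X) ∈ H n}) :
    TopologicalSpace.MetrizableSpace X :=
  (H m).metrizableSpace_of_isOpen <| (hfinal _).2 <|
    Monotone.isOpen_preimage_val_of_eventually_isOpen (S := fun n ↦ (H n : Set X))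
      (fun _ _ h ↦ hmono h) hopen

/-- If `X = lim→ Xₙ` is the inductive limit of a sequence of metrizable groups
with each `Xₙ` a closed subgroup of `Xₙ₊₁`, and `Xₙ` is open in `Xₙ₊₁` for all
`n ≥ m`, then `X` is metrizable. -/
theorem metrizable_of_eventually_open_inductive_limit {X : Type*} [Group X]
    [TopologicalSpace X] [IsTopologicalGroup X] (H : ℕ → Subgroup X)
    (hmono : Monotone H) (hunion : ∀ x : X, ∃ n, x ∈ H n)
    (hmetr : ∀ n, TopologicalSpace.MetrizableSpace (H n))
    (hclosed : ∀ n, IsClosed {x : H (n + 1) | (x : X) ∈ H n})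
    (hfinal : ∀ U : Set X, IsOpen U ↔ ∀ n, IsOpen ((↑) ⁻¹' U : Set (H n)))
    (m : ℕ) (hopen : ∀ n ≥ m, IsOpen {x : H (n + 1) | (x : X) ∈ H n}) :
    TopologicalSpace.MetrizableSpace X :=
  metrizable_of_eventually_open_inductive_limit_general H hmono hmetr hfinal m hopen
end

section
/- Let X = lim→ Xₙ be the inductive limit of a sequence of metrizable topological groups with Xₙ a closed subgroup of Xₙ₊₁ and all Xₙ locally compact. Then X contains an open subgroup that is an MK_ω-space. -/
/-!
Choose compact symmetric neighbourhoods of `1` in the `H n` and let `W k` be the union of the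
first `k + 1` of them. The sets `D k = W k ^ (k + 1)` are compact, metrizable (they lie in
`H k`), and their union `Y` is a subgroup. Since `D j * W n ⊆ D (j + n + 1)`, every
`g ∈ Y ∩ H n` has the neighbourhood `g • W n` in `H n` inside some `D r`; as `X` carries the
final topology of the `H n`, this makes `Y \ B` open whenever every `B ∩ D r` is closed. Taking
`B = ∅` shows that `Y` is open, and taking for `B` a set whose traces on the compact sets `D r`
are closed shows that `Y` carries the inductive limit topology of the `D r`.
-/

/-- A topological space is an `MK_ω`-space if it is the inductive limit of an
increasing sequence of its metrizable compact subsets. -/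
def IsMKOmega (X : Type*) [TopologicalSpace X] : Prop :=
  ∃ C : ℕ → Set X, Monotone C ∧ (∀ n, IsCompact (C n)) ∧
    (∀ n, TopologicalSpace.MetrizableSpace (C n)) ∧ (⋃ n, C n = Set.univ) ∧
    ∀ A : Set X, IsClosed A ↔ ∀ n, IsClosed ((↑) ⁻¹' A : Set (C n))

open Set Pointwise Topology TopologicalSpace

section Coherent

variable {X : Type*} [TopologicalSpace X]

theorem t1Space_of_forall_isOpen_preimage_val {ι : Type*} (S : ι → Set X)
    (hS : ∀ i, T1Space (S i))
    (hopen : ∀ U : Set X, (∀ i, IsOpen ((↑) ⁻¹' U : Set (S i))) → IsOpen U) :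
    T1Space X := by
  refine ⟨fun x => isOpen_compl_iff.1 <| hopen _ fun i => ?_⟩
  have := hS i
  rw [preimage_compl, isOpen_compl_iff]
  exact (subsingleton_singleton.preimage Subtype.val_injective).isClosed

theorem metrizableSpace_preimage_val {Y s : Set X} [MetrizableSpace s] :
    MetrizableSpace (Subtype.val ⁻¹' s : Set Y) :=
  ((IsEmbedding.subtypeVal.comp IsEmbedding.subtypeVal).codRestrict s
    fun x => x.2).metrizableSpace

variable {D : ℕ → Set X}

theorem isCompact_preimage_val_iUnion (hc : ∀ k, IsCompact (D k)) (k : ℕ) :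
    IsCompact (Subtype.val ⁻¹' D k : Set (⋃ k, D k)) := by
  rw [IsEmbedding.subtypeVal.isCompact_iff, Subtype.image_preimage_coe,
    inter_eq_right.2 (subset_iUnion D k)]
  exact hc k

theorem isClosed_of_forall_isClosed_preimage_val [T2Space X] (hc : ∀ k, IsCompact (D k))
    (hopen : ∀ B : Set X, (∀ k, IsClosed (B ∩ D k)) → IsOpen ((⋃ k, D k) \ B))
    {A : Set (⋃ k, D k)}
    (hA : ∀ k, IsClosed ((↑) ⁻¹' A : Set (Subtype.val ⁻¹' D k : Set (⋃ k, D k)))) :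
    IsClosed A := by
  have hB : ∀ k, IsClosed (Subtype.val '' A ∩ D k) := fun k => by
    have := isCompact_iff_compactSpace.1 (isCompact_preimage_val_iUnion hc k)
    have hAk : IsCompact (A ∩ Subtype.val ⁻¹' D k) := by
      simpa only [Subtype.image_preimage_coe, inter_comm] using
        (hA k).isCompact.image continuous_subtype_val
    rw [← image_inter_preimage]
    exact (hAk.image continuous_subtype_val).isClosed
  have hA : A = Subtype.val ⁻¹' ((⋃ k, D k) \ Subtype.val '' A)ᶜ := by
    ext x
    simp only [mem_preimage, mem_compl_iff, mem_sdiff, x.2, true_and, not_not,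
      Subtype.val_injective.mem_set_image]
  rw [hA]
  exact (hopen _ hB).isClosed_compl.preimage continuous_subtype_val

theorem isMKOmega_iUnion [T2Space X] (hmono : Monotone D) (hc : ∀ k, IsCompact (D k))
    (hmetr : ∀ k, MetrizableSpace (D k))
    (hopen : ∀ B : Set X, (∀ k, IsClosed (B ∩ D k)) → IsOpen ((⋃ k, D k) \ B)) :
    IsMKOmega (⋃ k, D k : Set X) :=
  ⟨fun k => Subtype.val ⁻¹' D k, fun _ _ h => preimage_mono (hmono h),
    isCompact_preimage_val_iUnion hc, fun k => have := hmetr k; metrizableSpace_preimage_val,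
    by rw [← preimage_iUnion, Subtype.coe_preimage_self],
    fun _ => ⟨fun hA _ => hA.preimage continuous_subtype_val,
      isClosed_of_forall_isClosed_preimage_val hc hopen⟩⟩

end Coherent

theorem IsCompact.pow {M : Type*} [Monoid M] [TopologicalSpace M] [ContinuousMul M]
    {s : Set M} (hs : IsCompact s) : ∀ n : ℕ, IsCompact (s ^ n)
  | 0 => by simp
  | n + 1 => by rw [pow_succ]; exact (hs.pow n).mul hs

section DiagonalPow

variable {G : Type*} [Group G] (W : ℕ → Set G)

def diagonalPow (k : ℕ) : Set G := W k ^ (k + 1)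

variable {W}

theorem diagonalPow_mul_subset (hW : Monotone W) (j k : ℕ) :
    diagonalPow W j * diagonalPow W k ⊆ diagonalPow W (j + k + 1) :=
  calc W j ^ (j + 1) * W k ^ (k + 1)
      ⊆ W (j + k + 1) ^ (j + 1) * W (j + k + 1) ^ (k + 1) :=
        mul_subset_mul (pow_subset_pow_left (hW (by omega))) (pow_subset_pow_left (hW (by omega)))
    _ = W (j + k + 1) ^ (j + k + 1 + 1) := by rw [← pow_add]; ring_nf

theorem monotone_diagonalPow (hW : Monotone W) (h1 : ∀ k, (1 : G) ∈ W k) :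
    Monotone (diagonalPow W) :=
  fun _ _ h => pow_subset_pow (hW h) (h1 _) (by omega)

theorem inv_diagonalPow (hinv : ∀ k, (W k)⁻¹ = W k) (k : ℕ) :
    (diagonalPow W k)⁻¹ = diagonalPow W k := by
  rw [diagonalPow, ← inv_pow, hinv]

theorem subset_diagonalPow {k : ℕ} (h1 : (1 : G) ∈ W k) : W k ⊆ diagonalPow W k :=
  subset_pow h1 k.succ_ne_zero

def diagonalPowSubgroup (hW : Monotone W) (h1 : ∀ k, (1 : G) ∈ W k)
    (hinv : ∀ k, (W k)⁻¹ = W k) : Subgroup G where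
  carrier := ⋃ k, diagonalPow W k
  one_mem' := mem_iUnion.2 ⟨0, subset_diagonalPow (h1 0) (h1 0)⟩
  mul_mem' := by
    rintro a b ⟨_, ⟨j, rfl⟩, ha⟩ ⟨_, ⟨k, rfl⟩, hb⟩
    exact mem_iUnion.2 ⟨_, diagonalPow_mul_subset hW j k (mul_mem_mul ha hb)⟩
  inv_mem' := by
    rintro a ⟨_, ⟨k, rfl⟩, ha⟩
    exact mem_iUnion.2 ⟨k, inv_diagonalPow hinv k ▸ inv_mem_inv.2 ha⟩

@[simp]
theorem coe_diagonalPowSubgroup (hW : Monotone W) (h1 : ∀ k, (1 : G) ∈ W k)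
    (hinv : ∀ k, (W k)⁻¹ = W k) :
    (diagonalPowSubgroup hW h1 hinv : Set G) = ⋃ k, diagonalPow W k :=
  rfl

end DiagonalPow

theorem isOpen_iUnion_diff_of_isClosed_inter {G ι : Type*} [Group G] [TopologicalSpace G]
    [IsTopologicalGroup G] {H : ι → Subgroup G}
    (hopen : ∀ U : Set G, (∀ i, IsOpen ((↑) ⁻¹' U : Set (H i))) → IsOpen U)
    {D : ℕ → Set G} (hmul : ∀ j k, ∃ r, D j * D k ⊆ D r)
    (hnhds : ∀ i, ∃ m, ((↑) ⁻¹' D m : Set (H i)) ∈ 𝓝 1)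
    {B : Set G} (hB : ∀ k, IsClosed (B ∩ D k)) : IsOpen ((⋃ k, D k) \ B) := by
  refine hopen _ fun i => isOpen_iff_mem_nhds.2 ?_
  rintro g ⟨hgD, hgB⟩
  obtain ⟨j, hj⟩ := mem_iUnion.1 hgD
  obtain ⟨m, hm⟩ := hnhds i
  obtain ⟨r, hr⟩ := hmul j m
  have hgN : g • ((↑) ⁻¹' D m : Set (H i)) ∈ 𝓝 g := by
    simpa using (smul_mem_nhds_smul_iff g).2 hm
  have hND : g • ((↑) ⁻¹' D m : Set (H i)) ⊆ (↑) ⁻¹' D r := by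
    rintro _ ⟨y, hy, rfl⟩
    exact hr (mul_mem_mul hj hy)
  have hgB' : ((↑) ⁻¹' (B ∩ D r)ᶜ : Set (H i)) ∈ 𝓝 g :=
    ((hB r).isOpen_compl.preimage continuous_subtype_val).mem_nhds fun h => hgB h.1
  filter_upwards [hgN, hgB'] with x hxN hxB
  exact ⟨mem_iUnion.2 ⟨r, hND hxN⟩, fun h => hxB ⟨h, hND hxN⟩⟩

theorem exists_isCompact_inv_eq_mem_nhds_one (G : Type*) [Group G] [TopologicalSpace G]
    [ContinuousInv G] [LocallyCompactSpace G] :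
    ∃ K : Set G, IsCompact K ∧ K⁻¹ = K ∧ K ∈ 𝓝 1 := by
  obtain ⟨K, hK, hK1⟩ := exists_compact_mem_nhds (1 : G)
  exact ⟨K ∪ K⁻¹, hK.union hK.inv, by rw [union_inv, inv_inv, union_comm],
    Filter.mem_of_superset hK1 subset_union_left⟩

theorem exists_monotone_isCompact_inv_eq_mem_nhds_one {G : Type*} [Group G] [TopologicalSpace G]
    [IsTopologicalGroup G] {H : ℕ → Subgroup G} (hmono : Monotone H)
    (hlc : ∀ n, LocallyCompactSpace (H n)) :
    ∃ W : ℕ → Set G, Monotone W ∧ (∀ k, IsCompact (W k)) ∧ (∀ k, (W k)⁻¹ = W k) ∧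
      (∀ k, W k ⊆ H k) ∧ ∀ k, ((↑) ⁻¹' W k : Set (H k)) ∈ 𝓝 1 := by
  choose K hKc hKinv hK1 using fun n =>
    have := hlc n
    exists_isCompact_inv_eq_mem_nhds_one (H n)
  set V : ℕ → Set G := fun n => Subtype.val '' K n
  have hVinv : ∀ n, (V n)⁻¹ = V n := fun n => by
    simpa [V, hKinv n] using (image_inv (H n).subtype (K n)).symm
  refine ⟨accumulate V, monotone_accumulate,
    isCompact_accumulate fun n => (hKc n).image continuous_subtype_val, fun k => ?_,
    fun k => iUnion₂_subset fun n hn => (Subtype.coe_image_subset _ _).trans (hmono hn),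
    fun k => Filter.mem_of_superset (hK1 k) ?_⟩
  · simp only [accumulate_def, iUnion_inv, hVinv]
  · rw [← Subtype.val_injective.preimage_image (K k)]
    exact preimage_mono (subset_accumulate (s := V))

theorem exists_open_MKomega_subgroup_general {X : Type*} [Group X]
    [TopologicalSpace X] [IsTopologicalGroup X] (H : ℕ → Subgroup X)
    (hmono : Monotone H)
    (hmetr : ∀ n, TopologicalSpace.MetrizableSpace (H n))
    (hlc : ∀ n, LocallyCompactSpace (H n))
    (hfinal : ∀ U : Set X, IsOpen U ↔ ∀ n, IsOpen ((↑) ⁻¹' U : Set (H n))) :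
    ∃ Y : Subgroup X, IsOpen (Y : Set X) ∧ IsMKOmega Y := by
  have hopen := fun U => (hfinal U).2
  have : T1Space X := t1Space_of_forall_isOpen_preimage_val (fun n => (H n : Set X))
    (fun n => have := hmetr n; inferInstanceAs (T1Space (H n))) hopen
  have : T2Space X := IsTopologicalGroup.t2Space_iff_one_closed.2 isClosed_singleton
  obtain ⟨W, hWmono, hWc, hWinv, hWH, hW1⟩ :=
    exists_monotone_isCompact_inv_eq_mem_nhds_one hmono hlc
  have hone : ∀ k, (1 : X) ∈ W k := fun k => by
    simpa using mem_of_mem_nhds (hW1 k)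
  have hDopen : ∀ B : Set X, (∀ k, IsClosed (B ∩ diagonalPow W k)) →
      IsOpen ((⋃ k, diagonalPow W k) \ B) := fun B =>
    isOpen_iUnion_diff_of_isClosed_inter hopen
      (fun j k => ⟨_, diagonalPow_mul_subset hWmono j k⟩)
      (fun k => ⟨k, Filter.mem_of_superset (hW1 k)
        (preimage_mono (subset_diagonalPow (hone k)))⟩)
  have hDmetr : ∀ k, MetrizableSpace (diagonalPow W k) := fun k =>
    have : MetrizableSpace (H k : Set X) := hmetr k
    (IsEmbedding.inclusion (Subgroup.pow_subset (hWH k))).metrizableSpace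
  refine ⟨diagonalPowSubgroup hWmono hone hWinv, by
    simpa using hDopen ∅ (by simp),
    isMKOmega_iUnion (monotone_diagonalPow hWmono hone) (fun k => (hWc k).pow _) hDmetr hDopen⟩

/-- If `X = lim→ Xₙ` is the inductive limit of a sequence of locally compact
metrizable groups, each closed in the next, then `X` contains an open subgroup
which is an `MK_ω`-space. -/
theorem exists_open_MKomega_subgroup {X : Type*} [Group X]
    [TopologicalSpace X] [IsTopologicalGroup X] (H : ℕ → Subgroup X)
    (hmono : Monotone H) (hunion : ∀ x : X, ∃ n, x ∈ H n)
    (hmetr : ∀ n, TopologicalSpace.MetrizableSpace (H n))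
    (hclosed : ∀ n, IsClosed {x : H (n + 1) | (x : X) ∈ H n})
    (hlc : ∀ n, LocallyCompactSpace (H n))
    (hfinal : ∀ U : Set X, IsOpen U ↔ ∀ n, IsOpen ((↑) ⁻¹' U : Set (H n))) :
    ∃ Y : Subgroup X, IsOpen (Y : Set X) ∧ IsMKOmega Y :=
  exists_open_MKomega_subgroup_general H hmono hmetr hlc hfinal
end

section
/- The product ℝ^ω × φ, where φ is the strict inductive limit of the spaces ℝⁿ, is not an Ascoli space. In particular, the product of a metrizable space and a sequential space need not be Ascoli. -/
open Filter Topology Set Function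

theorem IsAscoli.equicontinuous_of_tendsto {X : Type*} [TopologicalSpace X] (hX : IsAscoli X)
    {f : ℕ → C(X, ℝ)} {g : C(X, ℝ)} (hf : Tendsto f atTop (𝓝 g)) :
    Equicontinuous fun n => (f n : X → ℝ) :=
  (hX _ hf.isCompact_insert_range).comp fun n => ⟨f n, mem_insert_of_mem _ (mem_range_self n)⟩

theorem ContinuousMap.tendsto_of_eventually_eqOn {X Y ι : Type*} [TopologicalSpace X]
    [UniformSpace Y] {p : Filter ι} {F : ι → C(X, Y)} {f : C(X, Y)}
    (h : ∀ K, IsCompact K → ∀ᶠ i in p, EqOn f (F i) K) : Tendsto F p (𝓝 f) :=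
  ContinuousMap.tendsto_iff_forall_isCompact_tendstoUniformlyOn.2 fun K hK =>
    (ContinuousMap.tendsto_iff_forall_isCompact_tendstoUniformlyOn.1 tendsto_const_nhds K hK).congr
      (h K hK)

theorem eventually_cofinite_forall_update_mem {ι : Type*} {π : ι → Type*}
    [∀ i, TopologicalSpace (π i)] [DecidableEq ι] {x : ∀ i, π i} {V : Set (∀ i, π i)}
    (hV : V ∈ 𝓝 x) : ∀ᶠ i in cofinite, ∀ z, update x i z ∈ V := by
  rw [nhds_pi, mem_pi'] at hV
  obtain ⟨I, t, ht, hIt⟩ := hV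
  filter_upwards [I.finite_toSet.compl_mem_cofinite] with i hi z
  refine hIt fun j hj => ?_
  rw [update_of_ne (ne_of_mem_of_not_mem hj hi)]
  exact mem_of_mem_nhds (ht j)

namespace Finsupp

variable {ι : Type*}

theorem continuous_linearMap_of_le_locallyConvex [t : TopologicalSpace (ι →₀ ℝ)]
    {F : Type*} [AddCommGroup F] [Module ℝ F] [TopologicalSpace F] [IsTopologicalAddGroup F]
    [ContinuousSMul ℝ F] [LocallyConvexSpace ℝ F]
    (hfinest : ∀ t' : TopologicalSpace (ι →₀ ℝ),
      @IsTopologicalAddGroup _ t' _ → @ContinuousSMul ℝ _ _ _ t' →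
      @LocallyConvexSpace ℝ _ _ _ _ _ t' →
      (∀ n : ι, @Continuous _ _ _ t' fun c : ℝ => Finsupp.single n c) → t ≤ t')
    (ℓ : (ι →₀ ℝ) →ₗ[ℝ] F) : Continuous ℓ := by
  refine continuous_iff_le_induced.2 <| hfinest _ (topologicalAddGroup_induced ℓ)
    (continuousSMul_induced ℓ) (.induced ℓ) fun n => continuous_induced_rng.2 ?_
  have hsingle : ℓ ∘ single n = fun c : ℝ => c • ℓ (single n 1) := by
    ext c
    rw [comp_apply, ← smul_single_one, map_smul]
  rw [hsingle]
  fun_prop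

noncomputable def dualPairing (y : ι →₀ ℝ) : (ι → ℝ) →L[ℝ] ℝ :=
  ∑ m ∈ y.support, y m • ContinuousLinearMap.proj m

theorem dualPairing_apply (y : ι →₀ ℝ) (d : ι → ℝ) :
    y.dualPairing d = linearCombination ℝ d y := by
  simp [dualPairing, linearCombination_apply, Finsupp.sum, mul_comm]

theorem dualPairing_single [DecidableEq ι] (y : ι →₀ ℝ) (k : ι) (z : ℝ) :
    y.dualPairing (Pi.single k z) = y k * z := by
  simp +contextual [dualPairing_apply, linearCombination_apply, Pi.single_apply]

theorem eventually_cofinite_forall_apply_eq_zero [Countable ι] {B : Set (ι →₀ ℝ)}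
    (hB : ∀ ℓ : (ι →₀ ℝ) →ₗ[ℝ] ℝ, Bornology.IsBounded (ℓ '' B)) :
    ∀ᶠ k in cofinite, ∀ y ∈ B, y k = 0 := by
  classical
  have hequi : UniformEquicontinuous fun y : B => ((y : ι →₀ ℝ).dualPairing : (ι → ℝ) → ℝ) :=
    PolynormableSpace.banach_steinhaus fun d => by
      rw [NormedSpace.isVonNBounded_iff]
      simpa [dualPairing_apply, image_eq_range] using hB (linearCombination ℝ d)
  have hsmall := Metric.equicontinuousAt_iff_right.1 (hequi.equicontinuous 0) 1 one_pos
  filter_upwards [eventually_cofinite_forall_update_mem hsmall] with k hk y hy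
  by_contra hne
  have := hk (y k)⁻¹ ⟨y, hy⟩
  rw [← Pi.single, dualPairing_single, mul_inv_cancel₀ hne] at this
  simp at this

end Finsupp

theorem not_equicontinuousAt_min_one_abs_mul {ι : Type*} [Infinite ι]
    [TopologicalSpace (ι →₀ ℝ)] (hincl : ∀ n : ι, Continuous fun c : ℝ => Finsupp.single n c) :
    ¬ EquicontinuousAt (fun n (p : (ι → ℝ) × (ι →₀ ℝ)) => min 1 |p.1 n * p.2 n|) (0, 0) := by
  classical
  intro h
  obtain ⟨pa, hpa, pb, hpb, hp⟩ :=
    eventually_prod_iff.1 <| nhds_prod_eq (X := ι → ℝ) (Y := ι →₀ ℝ) ▸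
      Metric.equicontinuousAt_iff_right.1 h 1 one_pos
  obtain ⟨n, hn⟩ := (eventually_cofinite_forall_update_mem hpa).exists
  have hsingle : ∀ᶠ c in 𝓝[≠] 0, pb (Finsupp.single n c) :=
    nhdsWithin_le_nhds <| ((hincl n).tendsto' 0 0 (Finsupp.single_zero n)).eventually hpb
  obtain ⟨c, hcW, hc⟩ := (hsingle.and self_mem_nhdsWithin).exists
  have := hp (hn c⁻¹) hcW n
  simp [inv_mul_cancel₀ hc] at this

theorem prod_pi_phi_not_isAscoli_general
    [t : TopologicalSpace (ℕ →₀ ℝ)]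
    (hincl : ∀ n : ℕ, Continuous fun c : ℝ => Finsupp.single n c)
    (hfinest : ∀ t' : TopologicalSpace (ℕ →₀ ℝ),
      @IsTopologicalAddGroup _ t' _ → @ContinuousSMul ℝ _ _ _ t' →
      @LocallyConvexSpace ℝ _ _ _ _ _ t' →
      (∀ n : ℕ, @Continuous _ _ _ t' fun c : ℝ => Finsupp.single n c) → t ≤ t') :
    ¬ IsAscoli ((ℕ → ℝ) × (ℕ →₀ ℝ)) := by
  intro hA
  have hcont := Finsupp.continuous_linearMap_of_le_locallyConvex (F := ℝ) hfinest
  have hev (n : ℕ) : Continuous fun y : ℕ →₀ ℝ => y n := hcont (Finsupp.lapply n)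
  let f (n : ℕ) : C((ℕ → ℝ) × (ℕ →₀ ℝ), ℝ) := ⟨fun p => min 1 |p.1 n * p.2 n|,
    continuous_const.min ((continuous_apply n).fst'.mul (hev n).snd').abs⟩
  have hf : Tendsto f atTop (𝓝 0) := by
    refine ContinuousMap.tendsto_of_eventually_eqOn fun K hK => ?_
    have hsupp := Finsupp.eventually_cofinite_forall_apply_eq_zero fun ℓ =>
      ((hK.image continuous_snd).image (hcont ℓ)).isBounded
    rw [Nat.cofinite_eq_atTop] at hsupp
    filter_upwards [hsupp] with n hn p hp
    simp [f, hn p.2 (mem_image_of_mem _ hp)]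
  exact not_equicontinuousAt_min_one_abs_mul hincl (hA.equicontinuous_of_tendsto hf (0, 0))

/-- `ℝ^ω × φ` is not an Ascoli space, where `φ = lim→ ℝⁿ` is the countable
direct sum of copies of `ℝ` (here modelled on `ℕ →₀ ℝ`) equipped with the finest
locally convex vector topology making the inclusions `ℝ → φ` continuous, and
`ℝ^ω` carries the product topology. -/
theorem prod_pi_phi_not_isAscoli
    [t : TopologicalSpace (ℕ →₀ ℝ)] [IsTopologicalAddGroup (ℕ →₀ ℝ)]
    [ContinuousSMul ℝ (ℕ →₀ ℝ)] [LocallyConvexSpace ℝ (ℕ →₀ ℝ)]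
    (hincl : ∀ n : ℕ, Continuous fun c : ℝ => Finsupp.single n c)
    (hfinest : ∀ t' : TopologicalSpace (ℕ →₀ ℝ),
      @IsTopologicalAddGroup _ t' _ → @ContinuousSMul ℝ _ _ _ t' →
      @LocallyConvexSpace ℝ _ _ _ _ _ t' →
      (∀ n : ℕ, @Continuous _ _ _ t' fun c : ℝ => Finsupp.single n c) → t ≤ t') :
    ¬ IsAscoli ((ℕ → ℝ) × (ℕ →₀ ℝ)) :=
  prod_pi_phi_not_isAscoli_general (t := t) hincl hfinest
end
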